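/- Let U ⊆ E_{n,k} with fixed restricted instance I_U (with Pr_{D*}[x_V, I_U] > 0), and let (μ*|_U)^∧(α,β,γ) denote the Fourier coefficients of the conditioned planted density with respect to the bases χ_α, φ_β, ψ_γ on the coordinates x ∈ {-1,1}^n and the instance coordinates outside U. For all α ⊆ [n], β ⊆ E_{n,k}\U and γ with γ̄ ⊆ E_{n,k}\U: if γ ⊢ α, r(γ) ≥ t and β ⊆ γ̄, then |(μ*|_U)^∧(α,β,γ)| ≤ √(pq)^{|γ̄ ∩ β|} · p^{|γ̄ \ β|}; and if any of these conditions fails (or β or γ̄ meets U), then (μ*|_U)^∧(α,β,γ) = 0. -/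

import Mathlib

open Finset Matrix
open scoped BigOperators Classical

noncomputable section

namespace RandomCSP

/-- Scopes: `k`-tuples of distinct indices in `[n]`, i.e. injective maps `Fin k → Fin n`. -/
abbrev Scope (n k : ℕ) := {S : Fin k → Fin n // Function.Injective S}

/-- An instance of a CSP: for each scope an inclusion bit (`true` encodes `y_S = -1`,
i.e. the constraint on scope `S` is included) and a tuple of negation bits
(`true` encodes `-1`). -/
abbrev Inst (n k : ℕ) := (Scope n k → Bool) × (Scope n k → Fin k → Bool)

/-- Assignments to the `n` variables (`true` encodes `-1`). -/
abbrev Assign (n : ℕ) := Fin n → Bool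

/-- Sign encoding: `true ↦ -1`, `false ↦ 1`. -/
def sgn (b : Bool) : ℝ := if b then -1 else 1

/-- The bits of the tuple `b_S ∘ x_S` (the product of signs is the xor of the bits). -/
def litBits (n k : ℕ) (x : Assign n) (I : Inst n k) (S : Scope n k) : Fin k → Bool :=
  fun j => xor (I.2 S j) (x (S.1 j))

/-- Probability mass of an instance under the distribution `D(p)`: each scope is included
independently with probability `p` and all negation bits are independent uniform bits. -/
def dpMass (n k : ℕ) (p : ℝ) (I : Inst n k) : ℝ :=
  (∏ S : Scope n k, if I.1 S then p else 1 - p) * (1 / 2) ^ (Fintype.card (Scope n k) * k)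

/-- Background mass on pairs (assignment, instance): uniform × `D(p)`. -/
def bgMass (n k : ℕ) (p : ℝ) (w : Assign n × Inst n k) : ℝ :=
  (1 / 2) ^ n * dpMass n k p w.2

/-- Probability mass of the planted distribution `D*` determined by a density `ηP` on
`{-1,1}^k`: `x` is uniform, each scope is included independently with probability `p`;
on included scopes `b_S = z_S ∘ x_S` with `z_S ∼ ηP`, on excluded scopes `b_S` is uniform. -/
def plantedMass (n k : ℕ) (p : ℝ) (ηP : (Fin k → Bool) → ℝ) (w : Assign n × Inst n k) : ℝ :=
  (1 / 2) ^ n * ∏ S : Scope n k,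
    (if w.2.1 S then p * (ηP (litBits n k w.1 w.2 S) * (1 / 2) ^ k)
     else (1 - p) * (1 / 2) ^ k)

/-- The planted density `μ*` relative to uniform × `D(p)`. -/
def muStar (n k : ℕ) (p : ℝ) (ηP : (Fin k → Bool) → ℝ) (w : Assign n × Inst n k) : ℝ :=
  plantedMass n k p ηP w / bgMass n k p w

/-- `P` supports a `(t-1)`-wise uniform distribution on satisfying assignments, with
density `ηP` relative to the uniform distribution on `{-1,1}^k`. -/
def SupportsUniform (k t : ℕ) (P : (Fin k → Bool) → Bool) (ηP : (Fin k → Bool) → ℝ) : Prop :=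
  (∀ z, 0 ≤ ηP z) ∧
  ((1 / 2 : ℝ) ^ k * ∑ z : Fin k → Bool, ηP z) = 1 ∧
  (∀ z, ηP z ≠ 0 → P z = true) ∧
  ∀ T : Finset (Fin k), T.card = t - 1 → ∀ a : Fin k → Bool,
    ((1 / 2 : ℝ) ^ k * ∑ z : Fin k → Bool, if ∀ j ∈ T, z j = a j then ηP z else 0)
      = (1 / 2 : ℝ) ^ (t - 1)

/-- The objective value `F(x,y,b) = Σ_S 1(y_S = -1)·P(b_S ∘ x_S)`. -/
def objVal (n k : ℕ) (P : (Fin k → Bool) → Bool) (x : Assign n) (I : Inst n k) : ℝ :=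
  ∑ S : Scope n k, if I.1 S = true ∧ P (litBits n k x I S) = true then 1 else 0

/-- Parity character `χ_α`. -/
def chiF (n : ℕ) (α : Finset (Fin n)) (x : Assign n) : ℝ := ∏ i ∈ α, sgn (x i)

/-- The `p`-biased single coordinate character: `φ(-1) = -√(q/p)`, `φ(1) = √(p/q)`. -/
def phiY (p : ℝ) (v : Bool) : ℝ :=
  if v then -Real.sqrt ((1 - p) / p) else Real.sqrt (p / (1 - p))

/-- The `p`-biased character `φ_β` on the inclusion bits. -/
def phiF (n k : ℕ) (p : ℝ) (β : Finset (Scope n k)) (y : Scope n k → Bool) : ℝ :=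
  ∏ S ∈ β, phiY p (y S)

/-- The character `ψ_γ` on the negation bits. -/
def psiF (n k : ℕ) (γ : Finset (Scope n k × Fin k)) (b : Scope n k → Fin k → Bool) : ℝ :=
  ∏ e ∈ γ, sgn (b e.1 e.2)

/-- `γ̄`: the set of scopes present in `γ`. -/
def scopesOf (n k : ℕ) (γ : Finset (Scope n k × Fin k)) : Finset (Scope n k) :=
  γ.image Prod.fst

/-- The Fourier coefficient `f̂(α,β,γ)` of a function on pairs (assignment, instance),
with respect to the background measure uniform × `D(p)`. -/
def fhat (n k : ℕ) (p : ℝ) (f : Assign n × Inst n k → ℝ)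
    (α : Finset (Fin n)) (β : Finset (Scope n k)) (γ : Finset (Scope n k × Fin k)) : ℝ :=
  ∑ w : Assign n × Inst n k,
    bgMass n k p w * f w * chiF n α w.1 * phiF n k p β w.2.1 * psiF n k γ w.2.2

/-- The Fourier coefficient of the planted density:
`μ̂*(α,β,γ) = E_{(x,y,b) ∼ D*}[χ_α(x) φ_β(y) ψ_γ(b)]`. -/
def muHat (n k : ℕ) (p : ℝ) (ηP : (Fin k → Bool) → ℝ)
    (α : Finset (Fin n)) (β : Finset (Scope n k)) (γ : Finset (Scope n k × Fin k)) : ℝ :=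
  ∑ w : Assign n × Inst n k,
    plantedMass n k p ηP w * chiF n α w.1 * phiF n k p β w.2.1 * psiF n k γ w.2.2

/-- The low-degree projection `L_d`, keeping exactly the Fourier terms `χ_α φ_β ψ_γ`
with `|α| ≤ d_x` and `|β ∪ γ̄| ≤ d_I`. -/
def Ld (n k : ℕ) (p : ℝ) (dx dI : ℕ) (f : Assign n × Inst n k → ℝ) :
    Assign n × Inst n k → ℝ :=
  fun w => ∑ α : Finset (Fin n), ∑ β : Finset (Scope n k), ∑ γ : Finset (Scope n k × Fin k),
    if α.card ≤ dx ∧ (β ∪ scopesOf n k γ).card ≤ dI then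
      fhat n k p f α β γ * chiF n α w.1 * phiF n k p β w.2.1 * psiF n k γ w.2.2
    else 0

/-- Override the coordinates of `I` on the scopes in `U` by those of `J`. -/
def override (n k : ℕ) (U : Finset (Scope n k)) (J I : Inst n k) : Inst n k :=
  (fun S => if S ∈ U then J.1 S else I.1 S,
   fun S j => if S ∈ U then J.2 S j else I.2 S j)

/-- The restriction `R_U f`: fix the instance coordinates on the scopes in `U`
to the restricted instance given by `J`. -/
def restrictU (n k : ℕ) (U : Finset (Scope n k)) (J : Inst n k)
    (f : Assign n × Inst n k → ℝ) : Assign n × Inst n k → ℝ :=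
  fun w => f (w.1, override n k U J w.2)

/-- `V(U)`: the set of variable indices appearing in the scopes of `U`. -/
def varsOf (n k : ℕ) (U : Finset (Scope n k)) : Finset (Fin n) :=
  U.biUnion fun S => Finset.image S.1 Finset.univ

/-- Agreement of `w'` with `w` on a block of variables `V` and scopes `U`. -/
def agreeOn (n k : ℕ) (V : Finset (Fin n)) (U : Finset (Scope n k))
    (w' w : Assign n × Inst n k) : Prop :=
  (∀ i ∈ V, w'.1 i = w.1 i) ∧
  ∀ S ∈ U, w'.2.1 S = w.2.1 S ∧ ∀ j, w'.2.2 S j = w.2.2 S j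

/-- Marginal probability under the mass function `μ` of agreeing with `w` on `(V, U)`. -/
def marg (n k : ℕ) (μ : Assign n × Inst n k → ℝ)
    (V : Finset (Fin n)) (U : Finset (Scope n k)) (w : Assign n × Inst n k) : ℝ :=
  ∑ w' : Assign n × Inst n k, if agreeOn n k V U w' w then μ w' else 0

/-- `π_U(x_V, I_U) = Pr_{D*}[x_V, I_U] / Pr_{uniform×D(p)}[x_V, I_U]`. -/
def piU (n k : ℕ) (p : ℝ) (ηP : (Fin k → Bool) → ℝ) (U : Finset (Scope n k))
    (w : Assign n × Inst n k) : ℝ :=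
  marg n k (plantedMass n k p ηP) (varsOf n k U) U w /
    marg n k (bgMass n k p) (varsOf n k U) U w

/-- The conditioned planted density `μ*|_U(x, I_{Uᶜ}) =
Pr_{D*}[x_{Vᶜ}, I_{Uᶜ} | x_V, I_U] / Pr_{D(p)}[x_{Vᶜ}, I_{Uᶜ}]`, viewed as a function of
all of `x` and of the instance coordinates outside `U` (fixed to `J` on `U`). -/
def condMu (n k : ℕ) (p : ℝ) (ηP : (Fin k → Bool) → ℝ) (U : Finset (Scope n k)) (J : Inst n k)
    (w : Assign n × Inst n k) : ℝ :=
  (plantedMass n k p ηP (w.1, override n k U J w.2) /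
      marg n k (plantedMass n k p ηP) (varsOf n k U) U (w.1, J)) /
    marg n k (bgMass n k p) (varsOf n k U)ᶜ Uᶜ (w.1, override n k U J w.2)

/-- Fourier coefficients of the conditioned planted density. -/
def condMuHat (n k : ℕ) (p : ℝ) (ηP : (Fin k → Bool) → ℝ)
    (U : Finset (Scope n k)) (J : Inst n k)
    (α : Finset (Fin n)) (β : Finset (Scope n k)) (γ : Finset (Scope n k × Fin k)) : ℝ :=
  fhat n k p (condMu n k p ηP U J) α β γ

/-- `γ ⊢ α`: every index of `α` appears an odd number of times as some `S_j` with
`(S,j) ∈ γ`, and every other index appears an even number of times. -/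
def derives (n k : ℕ) (γ : Finset (Scope n k × Fin k)) (α : Finset (Fin n)) : Prop :=
  ∀ i : Fin n, i ∈ α ↔ Odd (γ.filter fun e => e.1.1 e.2 = i).card

/-- `r(γ) ≥ t`: every scope present in `γ` contributes at least `t` coordinates. -/
def arityGE (n k : ℕ) (γ : Finset (Scope n k × Fin k)) (t : ℕ) : Prop :=
  ∀ S ∈ scopesOf n k γ, t ≤ (γ.filter fun e => e.1 = S).card

/-- `N_r(α)`: the number of pairs `(β,γ)` with `γ ⊢ α`, `r(γ) ≥ t`, `β ⊆ γ̄`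
and `|γ̄| = r`. -/
def Ncount (n k t : ℕ) (α : Finset (Fin n)) (r : ℕ) : ℕ :=
  (Finset.univ.filter fun bg : Finset (Scope n k) × Finset (Scope n k × Fin k) =>
    derives n k bg.2 α ∧ arityGE n k bg.2 t ∧ bg.1 ⊆ scopesOf n k bg.2 ∧
      (scopesOf n k bg.2).card = r).card

/-- `D` is a probability mass function. -/
def IsDist {Ω : Type*} [Fintype Ω] (D : Ω → ℝ) : Prop :=
  (∀ I, 0 ≤ D I) ∧ (∑ I : Ω, D I) = 1

/-- Marginal probability under `D` that an instance agrees with `I'` on the scopes of `V`. -/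
def imarg (n k : ℕ) (D : Inst n k → ℝ) (V : Finset (Scope n k)) (I' : Inst n k) : ℝ :=
  ∑ I : Inst n k,
    if ∀ S ∈ V, I.1 S = I'.1 S ∧ ∀ j, I.2 S j = I'.2 S j then D I else 0

/-- `D` is a `d`-conjunctive blockwise-dense distribution with parameter `δ` relative to
`D(p)`, with fixed block `U` fixed to the restricted instance given by `J`. -/
def IsCBD (n k : ℕ) (p : ℝ) (D : Inst n k → ℝ) (d δ : ℝ)
    (U : Finset (Scope n k)) (J : Inst n k) : Prop :=
  IsDist D ∧ (U.card : ℝ) ≤ d ∧ imarg n k D U J = 1 ∧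
  ∀ V : Finset (Scope n k), Disjoint V U → ∀ I' : Inst n k,
    imarg n k D V I' ≤ imarg n k (dpMass n k p) V I' ^ (1 - δ)

/-- `E_{I ∼ D}[φ_β(y) ψ_γ(b)]`. -/
def expBasis (n k : ℕ) (p : ℝ) (D : Inst n k → ℝ)
    (β : Finset (Scope n k)) (γ : Finset (Scope n k × Fin k)) : ℝ :=
  ∑ I : Inst n k, D I * phiF n k p β I.1 * psiF n k γ I.2

/-- The sup norm `‖φ_β ψ_γ‖_∞`. -/
def supPhiPsi (n k : ℕ) (p : ℝ) (β : Finset (Scope n k))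
    (γ : Finset (Scope n k × Fin k)) : ℝ :=
  max (Real.sqrt ((1 - p) / p)) (Real.sqrt (p / (1 - p))) ^ β.card

/-- `μ*` exhibits `ε(s_x, s_I)`-conditional Fourier decay, witnessed by the bounds `B`. -/
def CondDecay (n k : ℕ) (p : ℝ) (ηP : (Fin k → Bool) → ℝ) (dx dI b : ℕ) (δ : ℝ)
    (ε : ℕ → ℕ → ℝ)
    (B : Finset (Scope n k) → Finset (Fin n) → Finset (Scope n k) →
      Finset (Scope n k × Fin k) → ℝ) : Prop :=
  (∀ (D : Inst n k → ℝ) (U : Finset (Scope n k)) (J : Inst n k),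
      IsCBD n k p D (b : ℝ) δ U J →
      (∀ α β γ, |condMuHat n k p ηP U J α β γ| ≤ B U α β γ) ∧
      ∀ α : Finset (Fin n), α.card ≤ dx → ∀ sI : ℕ, sI ≤ dI →
        (∑ β : Finset (Scope n k), ∑ γ : Finset (Scope n k × Fin k),
            if sI ≤ (β ∪ scopesOf n k γ).card ∧ (β ∪ scopesOf n k γ).card ≤ dI then
              B U α β γ * expBasis n k p D β γ
            else 0)
          ≤ (n.choose α.card : ℝ) ^ (-(1 : ℝ) / 2) * ε α.card sI) ∧
  ∀ (α : Finset (Fin n)) (β β' : Finset (Scope n k)) (γ γ' : Finset (Scope n k × Fin k)),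
    Disjoint (β ∪ scopesOf n k γ) (β' ∪ scopesOf n k γ') →
    B ∅ α (β ∪ β') (γ ∪ γ') * supPhiPsi n k p β' γ' ≤ B ∅ α β γ

/-- The conditional Fourier decay rate for CSPs:
`ε(s_x, s_I) = (CΔ)^s (s/n)^{((t-2)/2)s} (s/s_x)^{s_x/2}` with `s = max(⌈s_x/k⌉, s_I)`. -/
def epsCSP (n k t : ℕ) (Δ C : ℝ) (sx sI : ℕ) : ℝ :=
  let s : ℕ := max (Nat.ceil ((sx : ℝ) / k)) sI
  (C * Δ) ^ s * ((s : ℝ) / n) ^ (((t : ℝ) - 2) / 2 * s) * ((s : ℝ) / sx) ^ ((sx : ℝ) / 2)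

/-- The error term `h` from the decomposition
`R_U μ̄* = π_U · L_{d''}(μ*|_U) + h`. -/
def errH (n k : ℕ) (p : ℝ) (ηP : (Fin k → Bool) → ℝ) (dx dI : ℕ)
    (U : Finset (Scope n k)) (J : Inst n k) : Assign n × Inst n k → ℝ :=
  fun w =>
    (Ld n k p dx (dI - U.card) (restrictU n k U J (muStar n k p ηP)) w
        - Ld n k p dx (dI - 2 * U.card) (restrictU n k U J (muStar n k p ηP)) w)
      + (restrictU n k U J (Ld n k p dx dI (muStar n k p ηP)) w
        - Ld n k p dx (dI - U.card)
            (restrictU n k U J (Ld n k p dx dI (muStar n k p ηP))) w)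

/-- A linear programming formulation of `CSP(P)` of size `R`. -/
structure LPForm (n k : ℕ) (P : (Fin k → Bool) → Bool) (R : ℕ) where
  dim : ℕ
  A : Matrix (Fin R) (Fin dim) ℝ
  bvec : Fin R → ℝ
  pt : Assign n → Fin dim → ℝ
  wt : Inst n k → Fin dim → ℝ
  feas : ∀ x, A.mulVec (pt x) ≤ bvec
  linearize : ∀ I x, dotProduct (wt I) (pt x) = objVal n k P x I

/-- The LP formulation certifies the upper bound `c` on the objective of instance `I`. -/
def Certifies {n k : ℕ} {P : (Fin k → Bool) → Bool} {R : ℕ}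
    (L : LPForm n k P R) (I : Inst n k) (c : ℝ) : Prop :=
  ∀ v : Fin L.dim → ℝ, L.A.mulVec v ≤ L.bvec → dotProduct (L.wt I) v ≤ c

end RandomCSP

end

/-!
For a fixed assignment `x` everything factors over scopes: the background measure is a product
over scopes and, once the marginal on `(V(U), U)` is divided out, `μ*|_U(x, ·)` is the product
over `S ∉ U` of the planted density `η_P(b_S ∘ x_S)` on included scopes. Hence `(μ*|_U)^∧(α,β,γ)`
is an average over `x` of `χ_α(x)` times a product of one-scope moments, each of which is
explicit. A moment is `1` on scopes untouched by `β` and `γ`; it vanishes if `S ∈ β` carries no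
`γ`-coordinate (the `p`-biased character has mean zero), if `S ∈ U` carries a coordinate (the
instance is frozen on `U`, so the character averages out), or if `0 < |γ_S| < t` (`η_P` is
`(t-1)`-wise uniform, so `η̂_P(γ_S) = 0`); otherwise it is
`p · φ(-1)^[S ∈ β] · η̂_P(γ_S) · χ_{γ_S}(x_S)`. Averaging the remaining character of `x` gives
`[γ ⊢ α]`, and `|η̂_P| ≤ 1`, `p · |φ(-1)| = √(pq)` give the bound.
-/

namespace RandomCSP

section Cube

lemma prod_ite_mem_eq_mul_prod_compl {ι M : Type*} [Fintype ι] [DecidableEq ι] [CommMonoid M]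
    (U : Finset ι) (f g : ι → M) :
    ∏ i, (if i ∈ U then f i else g i) = (∏ i ∈ U, f i) * ∏ i ∈ Uᶜ, g i := by
  rw [← Finset.prod_mul_prod_compl U]
  congr 1 <;> refine Finset.prod_congr rfl fun i hi => ?_
  · rw [if_pos hi]
  · rw [if_neg (Finset.mem_compl.1 hi)]

lemma two_pow_mul_half_pow (k : ℕ) : (2 : ℝ) ^ k * (1 / 2) ^ k = 1 := by
  rw [← mul_pow]; norm_num

lemma half_pow_eq_mul_compl {n : ℕ} (V : Finset (Fin n)) :
    (1 / 2 : ℝ) ^ n = (1 / 2) ^ V.card * (1 / 2) ^ Vᶜ.card := by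
  rw [← pow_add, Finset.card_add_card_compl, Fintype.card_fin]

lemma half_pow_mul_two_pow_card_compl {n : ℕ} (V : Finset (Fin n)) :
    (1 / 2 : ℝ) ^ n * 2 ^ Vᶜ.card = (1 / 2) ^ V.card := by
  rw [half_pow_eq_mul_compl V, mul_assoc, mul_comm (_ ^ _) (2 ^ _), two_pow_mul_half_pow, mul_one]

lemma sgn_xor (a b : Bool) : sgn (xor a b) = sgn a * sgn b := by
  cases a <;> cases b <;> norm_num [sgn]

lemma abs_sgn (b : Bool) : |sgn b| = 1 := by
  cases b <;> simp [sgn]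

lemma sum_sgn_pow (m : ℕ) : ∑ b : Bool, sgn b ^ m = if Even m then 2 else 0 := by
  rcases Nat.even_or_odd m with h | h
  · simp [sgn, h.neg_one_pow, h]
  · simp [sgn, h.neg_one_pow, Nat.not_even_iff_odd.2 h]

lemma sum_prod_sgn_pow {ι : Type*} [Fintype ι] [DecidableEq ι] (m : ι → ℕ) :
    ∑ x : ι → Bool, ∏ i, sgn (x i) ^ m i
      = if ∀ i, Even (m i) then 2 ^ Fintype.card ι else 0 := by
  rw [← Fintype.prod_sum (fun i b => sgn b ^ m i)]
  simp only [sum_sgn_pow, Finset.prod_ite_zero, Finset.mem_univ, true_implies,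
    Finset.prod_const, Finset.card_univ]

lemma sum_prod_sgn {ι : Type*} [Fintype ι] [DecidableEq ι] (T : Finset ι) :
    ∑ x : ι → Bool, ∏ i ∈ T, sgn (x i) = if T = ∅ then 2 ^ Fintype.card ι else 0 := by
  have hpow : ∀ x : ι → Bool, ∏ i ∈ T, sgn (x i) = ∏ i, sgn (x i) ^ (if i ∈ T then 1 else 0) := by
    intro x
    simp [pow_ite]
  simp_rw [hpow, sum_prod_sgn_pow, Finset.eq_empty_iff_forall_notMem]
  congr 1
  simp [apply_ite Even]

lemma sum_ite_agree {n : ℕ} (V : Finset (Fin n)) (x : Fin n → Bool)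
    {f : (Fin n → Bool) → ℝ} (hf : ∀ x', (∀ i ∈ V, x' i = x i) → f x' = f x) :
    ∑ x', (if ∀ i ∈ V, x' i = x i then f x' else 0) = 2 ^ Vᶜ.card * f x := by
  calc ∑ x', (if ∀ i ∈ V, x' i = x i then f x' else 0)
      = ∑ x' : Fin n → Bool, (∏ i, if i ∈ V then (if x' i = x i then 1 else 0) else 1) * f x := by
        refine Finset.sum_congr rfl fun x' _ => ?_
        rw [Fintype.prod_ite_mem, Finset.prod_boole]
        split_ifs with h
        · rw [hf x' h, one_mul]
        · rw [zero_mul]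
    _ = (∏ i, ∑ b : Bool, if i ∈ V then (if b = x i then 1 else 0) else 1) * f x := by
        rw [← Finset.sum_mul, Fintype.prod_sum]
    _ = 2 ^ Vᶜ.card * f x := by
        have hb : ∀ i, (∑ b : Bool, if i ∈ V then (if b = x i then (1 : ℝ) else 0) else 1)
            = if i ∈ Vᶜ then 2 else 1 := by
          intro i
          by_cases hi : i ∈ V <;> simp [hi]
        simp_rw [hb, Fintype.prod_ite_mem, Finset.prod_const]

end Cube

section FourierOfEta

variable {k : ℕ} {ηP : (Fin k → Bool) → ℝ}

noncomputable def etaHat (ηP : (Fin k → Bool) → ℝ) (T : Finset (Fin k)) : ℝ :=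
  (1 / 2) ^ k * ∑ z, ηP z * ∏ j ∈ T, sgn (z j)

lemma etaHat_empty (h1 : (1 / 2 : ℝ) ^ k * ∑ z, ηP z = 1) : etaHat ηP ∅ = 1 := by
  simpa [etaHat] using h1

lemma abs_etaHat_le_one (h0 : ∀ z, 0 ≤ ηP z) (h1 : (1 / 2 : ℝ) ^ k * ∑ z, ηP z = 1)
    (T : Finset (Fin k)) : |etaHat ηP T| ≤ 1 := by
  calc |etaHat ηP T| ≤ (1 / 2) ^ k * ∑ z, |ηP z * ∏ j ∈ T, sgn (z j)| := by
        rw [etaHat, abs_mul, abs_of_pos (by positivity)]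
        gcongr
        exact Finset.abs_sum_le_sum_abs _ _
    _ = 1 := by
        simp only [abs_mul, Finset.abs_prod, abs_sgn, Finset.prod_const_one, mul_one,
          abs_of_nonneg (h0 _)]
        exact h1

lemma etaHat_xor (m : Fin k → Bool) (T : Finset (Fin k)) :
    (1 / 2) ^ k * ∑ c : Fin k → Bool, ηP (fun j => xor (c j) (m j)) * ∏ j ∈ T, sgn (c j)
      = (∏ j ∈ T, sgn (m j)) * etaHat ηP T := by
  have hinv : Function.Involutive fun c : Fin k → Bool => fun j => xor (c j) (m j) := by
    intro c; funext j; simp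
  rw [etaHat, ← Equiv.sum_comp hinv.toPerm, Finset.mul_sum, Finset.mul_sum, Finset.mul_sum]
  refine Finset.sum_congr rfl fun c _ => ?_
  have hc : (fun j => xor (xor (c j) (m j)) (m j)) = c := hinv c
  simp only [Function.Involutive.coe_toPerm, hc, sgn_xor, Finset.prod_mul_distrib]
  ring

lemma etaHat_eq_zero_of_marginal_const {T T' : Finset (Fin k)} (hTT' : T ⊆ T')
    (hT : T.Nonempty) (C : ℝ)
    (hC : ∀ a : Fin k → Bool, ∑ z, (if ∀ j ∈ T', z j = a j then ηP z else 0) = C) :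
    etaHat ηP T = 0 := by
  have hψ : ∀ z a : Fin k → Bool, (∀ j ∈ T', a j = z j) →
      ∏ j ∈ T, sgn (a j) = ∏ j ∈ T, sgn (z j) := fun z a h =>
    Finset.prod_congr rfl fun j hj => by rw [h j (hTT' hj)]
  -- Pair the marginal on `T'` with `χ_T`: this gives `C · Σ_a χ_T(a) = 0`, and also, as `χ_T`
  -- only sees coordinates in `T'`, a multiple of `Σ_z η(z) χ_T(z)`.
  have hdouble : ∑ a : Fin k → Bool,
      (∑ z, if ∀ j ∈ T', z j = a j then ηP z else 0) * ∏ j ∈ T, sgn (a j)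
        = 2 ^ T'ᶜ.card * ∑ z, ηP z * ∏ j ∈ T, sgn (z j) := by
    calc _ = ∑ z, ηP z * ∑ a : Fin k → Bool,
            (if ∀ j ∈ T', a j = z j then ∏ j ∈ T, sgn (a j) else 0) := by
          simp_rw [Finset.sum_mul, Finset.mul_sum]
          rw [Finset.sum_comm]
          refine Finset.sum_congr rfl fun z _ => Finset.sum_congr rfl fun a _ => ?_
          by_cases h : ∀ j ∈ T', a j = z j
          · rw [if_pos fun j hj => (h j hj).symm, if_pos h]
          · rw [if_neg fun h' => h fun j hj => (h' j hj).symm, if_neg h]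
            ring
      _ = _ := by
          rw [Finset.mul_sum]
          refine Finset.sum_congr rfl fun z _ => ?_
          rw [sum_ite_agree T' z (hψ z)]
          ring
  have hzero : ∑ a : Fin k → Bool,
      (∑ z, if ∀ j ∈ T', z j = a j then ηP z else 0) * ∏ j ∈ T, sgn (a j) = 0 := by
    simp_rw [hC, ← Finset.mul_sum, sum_prod_sgn, if_neg hT.ne_empty, mul_zero]
  rw [hzero, eq_comm, mul_eq_zero] at hdouble
  rw [etaHat, hdouble.resolve_left (by positivity), mul_zero]

lemma etaHat_eq_zero {t : ℕ} (htk : t ≤ k)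
    (hunif : ∀ T : Finset (Fin k), T.card = t - 1 → ∀ a : Fin k → Bool,
      ((1 / 2 : ℝ) ^ k * ∑ z : Fin k → Bool, if ∀ j ∈ T, z j = a j then ηP z else 0)
        = (1 / 2 : ℝ) ^ (t - 1))
    {T : Finset (Fin k)} (hT : T.Nonempty) (hTt : T.card < t) : etaHat ηP T = 0 := by
  obtain ⟨T', hTT', hT'⟩ :=
    Finset.exists_superset_card_eq (s := T) (n := t - 1) (by omega) (by simp; omega)
  refine etaHat_eq_zero_of_marginal_const hTT' hT (2 ^ k * (1 / 2) ^ (t - 1)) fun a => ?_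
  rw [← hunif T' hT' a, ← mul_assoc, two_pow_mul_half_pow, one_mul]

end FourierOfEta

section BiasedCharacter

variable {p : ℝ}

lemma mul_sqrt_div_self {a : ℝ} (ha : 0 < a) (b : ℝ) : a * √(b / a) = √(a * b) := by
  rw [← Real.sqrt_sq ha.le, ← Real.sqrt_mul (sq_nonneg a), Real.sqrt_sq ha.le]
  congr 1
  field_simp

lemma phiY_mean (hp0 : 0 < p) (hp1 : p < 1) :
    p * phiY p true + (1 - p) * phiY p false = 0 := by
  simp only [phiY, if_true, Bool.false_eq_true, if_false, mul_neg,
    mul_sqrt_div_self hp0, mul_sqrt_div_self (sub_pos.2 hp1), mul_comm (1 - p)]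
  ring

lemma mul_abs_phiY_true (hp0 : 0 < p) : p * |phiY p true| = √(p * (1 - p)) := by
  simp [phiY, abs_of_nonneg (Real.sqrt_nonneg _), mul_sqrt_div_self hp0]

end BiasedCharacter

section Scopes

variable {n k : ℕ}

def fiber (γ : Finset (Scope n k × Fin k)) (S : Scope n k) : Finset (Fin k) :=
  Finset.univ.filter fun j => (S, j) ∈ γ

lemma prod_eq_prod_prod_fiber {M : Type*} [CommMonoid M] (γ : Finset (Scope n k × Fin k))
    (f : Scope n k × Fin k → M) : ∏ e ∈ γ, f e = ∏ S, ∏ j ∈ fiber γ S, f (S, j) :=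
  Finset.prod_finset_product γ Finset.univ (fiber γ) (by simp [fiber])

lemma mem_scopesOf_iff {γ : Finset (Scope n k × Fin k)} {S : Scope n k} :
    S ∈ scopesOf n k γ ↔ (fiber γ S).Nonempty := by
  simp [scopesOf, fiber, Finset.Nonempty]

lemma card_filter_fst_eq_card_fiber (γ : Finset (Scope n k × Fin k)) (S : Scope n k) :
    (γ.filter fun e => e.1 = S).card = (fiber γ S).card :=
  Finset.card_nbij' Prod.snd (fun j => (S, j)) (by intro e; simp [fiber]; grind)
    (by intro j; simp [fiber]) (by intro e; simp; grind) (by intro j; simp)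

lemma sum_inst_prod (g : Scope n k → Bool → (Fin k → Bool) → ℝ) :
    ∑ I : Inst n k, ∏ S, g S (I.1 S) (I.2 S) = ∏ S, ∑ v, ∑ c, g S v c := by
  calc _ = ∑ y : Scope n k → Bool, ∏ S, ∑ c, g S (y S) c := by
        rw [Fintype.sum_prod_type]
        exact Finset.sum_congr rfl fun y _ => (Fintype.prod_sum fun S c => g S (y S) c).symm
    _ = _ := (Fintype.prod_sum fun S v => ∑ c, g S v c).symm

lemma sum_inst_agree (U : Finset (Scope n k)) (J : Inst n k)
    (g : Scope n k → Bool → (Fin k → Bool) → ℝ) :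
    ∑ I : Inst n k, (if ∀ S ∈ U, I.1 S = J.1 S ∧ ∀ j, I.2 S j = J.2 S j
        then ∏ S, g S (I.1 S) (I.2 S) else 0)
      = (∏ S ∈ U, g S (J.1 S) (J.2 S)) * ∏ S ∈ Uᶜ, ∑ v, ∑ c, g S v c := by
  let h : Scope n k → Bool → (Fin k → Bool) → ℝ := fun S v c =>
    if S ∈ U then (if v = J.1 S ∧ c = J.2 S then g S v c else 0) else g S v c
  have hpoint : ∀ I : Inst n k, (if ∀ S ∈ U, I.1 S = J.1 S ∧ ∀ j, I.2 S j = J.2 S j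
      then ∏ S, g S (I.1 S) (I.2 S) else 0) = ∏ S, h S (I.1 S) (I.2 S) := by
    intro I
    simp only [h, prod_ite_mem_eq_mul_prod_compl, Finset.prod_ite_zero, ← funext_iff,
      ← Finset.prod_mul_prod_compl U (fun S => g S (I.1 S) (I.2 S))]
    split_ifs <;> simp
  have hscope : ∀ S ∈ U, ∑ v, ∑ c, h S v c = g S (J.1 S) (J.2 S) := by
    intro S hS
    simp [h, hS, ite_and]
  simp_rw [hpoint, sum_inst_prod, h]
  rw [← Finset.prod_mul_prod_compl U]
  congr 1
  · exact Finset.prod_congr rfl fun S hS => by simpa [h] using hscope S hS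
  · exact Finset.prod_congr rfl fun S hS => by simp [Finset.mem_compl.1 hS]

lemma sum_chiF_mul_prod_sgn (α : Finset (Fin n)) (γ : Finset (Scope n k × Fin k)) :
    (1 / 2) ^ n * ∑ x : Assign n, chiF n α x * ∏ e ∈ γ, sgn (x (e.1.1 e.2))
      = if derives n k γ α then 1 else 0 := by
  have hmono : ∀ x : Assign n, chiF n α x * ∏ e ∈ γ, sgn (x (e.1.1 e.2))
      = ∏ i, sgn (x i) ^ ((if i ∈ α then 1 else 0) + (γ.filter fun e => e.1.1 e.2 = i).card) := by
    intro x
    simp only [pow_add, Finset.prod_mul_distrib, pow_ite, pow_one, pow_zero, chiF,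
      Fintype.prod_ite_mem]
    rw [← Finset.prod_fiberwise γ (fun e => e.1.1 e.2)]
    refine congrArg _ (Finset.prod_congr rfl fun i _ => ?_)
    rw [Finset.prod_congr rfl fun e he => by rw [(Finset.mem_filter.1 he).2], Finset.prod_const]
  have hparity : ∀ i, Even ((if i ∈ α then 1 else 0) + (γ.filter fun e => e.1.1 e.2 = i).card)
      ↔ (i ∈ α ↔ Odd (γ.filter fun e => e.1.1 e.2 = i).card) := by
    intro i
    by_cases hi : i ∈ α <;> simp [hi, Nat.even_add_one, add_comm 1]
  unfold derives
  simp_rw [hmono, sum_prod_sgn_pow, Fintype.card_fin, hparity]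
  split_ifs
  · rw [mul_comm, two_pow_mul_half_pow]
  · rw [mul_zero]

end Scopes

section Marginals

variable {n k : ℕ} {p : ℝ} {ηP : (Fin k → Bool) → ℝ}

noncomputable def bgFactor (k : ℕ) (p : ℝ) (v : Bool) : ℝ :=
  (if v then p else 1 - p) * (1 / 2) ^ k

noncomputable def plantedFactor (p : ℝ) (ηP : (Fin k → Bool) → ℝ) (x : Assign n)
    (S : Scope n k) (v : Bool) (c : Fin k → Bool) : ℝ :=
  bgFactor k p v * if v then ηP (fun j => xor (c j) (x (S.1 j))) else 1

lemma bgFactor_ne_zero (hp0 : 0 < p) (hp1 : p < 1) (v : Bool) : bgFactor k p v ≠ 0 := by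
  cases v <;> simp [bgFactor] <;> linarith

lemma bgMass_eq (x : Assign n) (I : Inst n k) :
    bgMass n k p (x, I) = (1 / 2) ^ n * ∏ S, bgFactor k p (I.1 S) := by
  simp only [bgMass, dpMass, bgFactor, Finset.prod_mul_distrib, Finset.prod_const,
    Finset.card_univ, pow_mul']

lemma plantedMass_eq (x : Assign n) (I : Inst n k) :
    plantedMass n k p ηP (x, I) = (1 / 2) ^ n * ∏ S, plantedFactor p ηP x S (I.1 S) (I.2 S) := by
  simp only [plantedMass, plantedFactor, bgFactor]
  congr 1
  refine Finset.prod_congr rfl fun S _ => ?_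
  unfold litBits
  split_ifs <;> ring

lemma sum_bgFactor : ∑ v, ∑ _c : Fin k → Bool, bgFactor k p v = 1 := by
  simp only [bgFactor, Finset.sum_const, Finset.card_univ, Fintype.card_fun, Fintype.card_bool,
    Fintype.card_fin, nsmul_eq_mul, Fintype.sum_bool, if_true, Bool.false_eq_true, if_false]
  push_cast
  linear_combination two_pow_mul_half_pow k

lemma sum_plantedFactor (h1 : (1 / 2 : ℝ) ^ k * ∑ z, ηP z = 1) (x : Assign n) (S : Scope n k) :
    ∑ v, ∑ c, plantedFactor p ηP x S v c = 1 := by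
  have hη := etaHat_xor (ηP := ηP) (fun j => x (S.1 j)) ∅
  simp only [Finset.prod_empty, mul_one, etaHat_empty h1] at hη
  simp only [plantedFactor, bgFactor, Fintype.sum_bool, if_true, Bool.false_eq_true, if_false,
    mul_one, Finset.sum_const, Finset.card_univ, Fintype.card_fun, Fintype.card_bool,
    Fintype.card_fin, nsmul_eq_mul, ← Finset.mul_sum]
  rw [mul_assoc, hη]
  push_cast
  linear_combination (1 - p) * two_pow_mul_half_pow k

lemma marg_eq_sum (μ : Assign n × Inst n k → ℝ) (V : Finset (Fin n)) (U : Finset (Scope n k))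
    (x : Assign n) (J : Inst n k) :
    marg n k μ V U (x, J) = ∑ x' : Assign n, if ∀ i ∈ V, x' i = x i then
      ∑ I : Inst n k, (if ∀ S ∈ U, I.1 S = J.1 S ∧ ∀ j, I.2 S j = J.2 S j
        then μ (x', I) else 0) else 0 := by
  rw [marg, Fintype.sum_prod_type]
  refine Finset.sum_congr rfl fun x' _ => ?_
  by_cases hx : ∀ i ∈ V, x' i = x i
  · rw [if_pos hx]
    exact Finset.sum_congr rfl fun I _ => if_congr (and_iff_right hx) rfl rfl
  · rw [if_neg hx]
    exact Finset.sum_eq_zero fun I _ => if_neg fun h => hx h.1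

lemma marg_bgMass (V : Finset (Fin n)) (U : Finset (Scope n k)) (x : Assign n) (I : Inst n k) :
    marg n k (bgMass n k p) V U (x, I) = (1 / 2) ^ V.card * ∏ S ∈ U, bgFactor k p (I.1 S) := by
  have hinst : ∀ x' : Assign n, ∑ I' : Inst n k,
      (if ∀ S ∈ U, I'.1 S = I.1 S ∧ ∀ j, I'.2 S j = I.2 S j then bgMass n k p (x', I') else 0)
        = (1 / 2) ^ n * ∏ S ∈ U, bgFactor k p (I.1 S) := by
    intro x'
    simp_rw [bgMass_eq, ← mul_ite_zero, ← Finset.mul_sum]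
    rw [sum_inst_agree U I (fun S v _ => bgFactor k p v)]
    simp only [sum_bgFactor, Finset.prod_const_one, mul_one]
  rw [marg_eq_sum]
  simp_rw [hinst]
  rw [sum_ite_agree V x fun _ _ => rfl, ← mul_assoc, mul_comm (2 ^ _),
    half_pow_mul_two_pow_card_compl]

lemma mem_varsOf {U : Finset (Scope n k)} {S : Scope n k} (hS : S ∈ U) (j : Fin k) :
    S.1 j ∈ varsOf n k U :=
  Finset.mem_biUnion.2 ⟨S, hS, Finset.mem_image_of_mem _ (Finset.mem_univ j)⟩

lemma marg_plantedMass (h1 : (1 / 2 : ℝ) ^ k * ∑ z, ηP z = 1) (U : Finset (Scope n k))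
    (x : Assign n) (J : Inst n k) :
    marg n k (plantedMass n k p ηP) (varsOf n k U) U (x, J)
      = (1 / 2) ^ (varsOf n k U).card * ∏ S ∈ U, plantedFactor p ηP x S (J.1 S) (J.2 S) := by
  have hinst : ∀ x' : Assign n, ∑ I : Inst n k,
      (if ∀ S ∈ U, I.1 S = J.1 S ∧ ∀ j, I.2 S j = J.2 S j then plantedMass n k p ηP (x', I)
        else 0) = (1 / 2) ^ n * ∏ S ∈ U, plantedFactor p ηP x' S (J.1 S) (J.2 S) := by
    intro x'
    simp_rw [plantedMass_eq, ← mul_ite_zero, ← Finset.mul_sum]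
    rw [sum_inst_agree U J (plantedFactor p ηP x')]
    simp only [sum_plantedFactor h1, Finset.prod_const_one, mul_one]
  have hlocal : ∀ x' : Assign n, (∀ i ∈ varsOf n k U, x' i = x i) →
      (1 / 2 : ℝ) ^ n * ∏ S ∈ U, plantedFactor p ηP x' S (J.1 S) (J.2 S)
        = (1 / 2) ^ n * ∏ S ∈ U, plantedFactor p ηP x S (J.1 S) (J.2 S) := by
    intro x' hx'
    congr 1
    refine Finset.prod_congr rfl fun S hS => ?_
    simp only [plantedFactor, hx' _ (mem_varsOf hS _)]
  rw [marg_eq_sum]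
  simp_rw [hinst]
  rw [sum_ite_agree _ x hlocal, ← mul_assoc, mul_comm (2 ^ _),
    half_pow_mul_two_pow_card_compl]

end Marginals

section ConditionedDensity

variable {n k : ℕ} {p : ℝ} {ηP : (Fin k → Bool) → ℝ} {U : Finset (Scope n k)} {J : Inst n k}

lemma condMu_eq (hp0 : 0 < p) (hp1 : p < 1) (h1 : (1 / 2 : ℝ) ^ k * ∑ z, ηP z = 1)
    (hpos : ∀ x : Assign n, 0 < marg n k (plantedMass n k p ηP) (varsOf n k U) U (x, J))
    (x : Assign n) (I : Inst n k) :
    condMu n k p ηP U J (x, I) = ∏ S ∈ Uᶜ, if I.1 S then ηP (litBits n k x I S) else 1 := by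
  have hplanted : plantedMass n k p ηP (x, override n k U J I)
      = (1 / 2) ^ n * ((∏ S ∈ U, plantedFactor p ηP x S (J.1 S) (J.2 S))
          * ∏ S ∈ Uᶜ, plantedFactor p ηP x S (I.1 S) (I.2 S)) := by
    rw [plantedMass_eq, ← Finset.prod_mul_prod_compl U]
    congr 2 <;> refine Finset.prod_congr rfl fun S hS => ?_
    · simp [override, hS]
    · simp [override, Finset.mem_compl.1 hS]
  have hbg : marg n k (bgMass n k p) (varsOf n k U)ᶜ Uᶜ (x, override n k U J I)
      = (1 / 2) ^ (varsOf n k U)ᶜ.card * ∏ S ∈ Uᶜ, bgFactor k p (I.1 S) := by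
    rw [marg_bgMass]
    congr 1
    exact Finset.prod_congr rfl fun S hS => by simp [override, Finset.mem_compl.1 hS]
  have hA : ∏ S ∈ U, plantedFactor p ηP x S (J.1 S) (J.2 S) ≠ 0 :=
    right_ne_zero_of_mul (marg_plantedMass h1 U x J ▸ (hpos x).ne')
  have hG : ∏ S ∈ Uᶜ, bgFactor k p (I.1 S) ≠ 0 :=
    Finset.prod_ne_zero_iff.2 fun S _ => bgFactor_ne_zero hp0 hp1 _
  rw [condMu, hplanted, marg_plantedMass h1, hbg, half_pow_eq_mul_compl (varsOf n k U)]
  calc _ = (∏ S ∈ Uᶜ, plantedFactor p ηP x S (I.1 S) (I.2 S))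
        / ∏ S ∈ Uᶜ, bgFactor k p (I.1 S) := by
        field_simp
    _ = _ := by
        rw [← Finset.prod_div_distrib]
        refine Finset.prod_congr rfl fun S _ => ?_
        rw [plantedFactor, mul_div_cancel_left₀ _ (bgFactor_ne_zero hp0 hp1 _)]
        rfl

/-- The expectation over `(y_S, b_S) ∼ D(p)` of the `S`-factor of `μ*|_U · φ_β · ψ_γ` at `x`. -/
noncomputable def scopeMoment (p : ℝ) (ηP : (Fin k → Bool) → ℝ) (U β : Finset (Scope n k))
    (γ : Finset (Scope n k × Fin k)) (x : Assign n) (S : Scope n k) : ℝ :=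
  ∑ v, ∑ c : Fin k → Bool, bgFactor k p v
    * (if S ∈ U then 1 else if v then ηP (fun j => xor (c j) (x (S.1 j))) else 1)
    * (if S ∈ β then phiY p v else 1) * ∏ j ∈ fiber γ S, sgn (c j)

lemma condMuHat_eq (hp0 : 0 < p) (hp1 : p < 1) (h1 : (1 / 2 : ℝ) ^ k * ∑ z, ηP z = 1)
    (hpos : ∀ x : Assign n, 0 < marg n k (plantedMass n k p ηP) (varsOf n k U) U (x, J))
    (α : Finset (Fin n)) (β : Finset (Scope n k)) (γ : Finset (Scope n k × Fin k)) :
    condMuHat n k p ηP U J α β γ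
      = (1 / 2) ^ n * ∑ x, chiF n α x * ∏ S, scopeMoment p ηP U β γ x S := by
  rw [condMuHat, fhat, Fintype.sum_prod_type, Finset.mul_sum]
  refine Finset.sum_congr rfl fun x _ => ?_
  simp only [scopeMoment]
  rw [← sum_inst_prod, Finset.mul_sum, Finset.mul_sum]
  refine Finset.sum_congr rfl fun I _ => ?_
  simp only [Finset.prod_mul_distrib, prod_ite_mem_eq_mul_prod_compl, Finset.prod_const_one,
    one_mul]
  rw [bgMass_eq, condMu_eq hp0 hp1 h1 hpos, phiF, psiF, prod_eq_prod_prod_fiber]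
  unfold litBits
  ring

end ConditionedDensity

section ScopeMoments

variable {n k : ℕ} {p : ℝ} {ηP : (Fin k → Bool) → ℝ} {U β : Finset (Scope n k)}
  {γ : Finset (Scope n k × Fin k)}

noncomputable def scopeCoeff (p : ℝ) (ηP : (Fin k → Bool) → ℝ) (β : Finset (Scope n k))
    (γ : Finset (Scope n k × Fin k)) (S : Scope n k) : ℝ :=
  p * (if S ∈ β then phiY p true else 1) * etaHat ηP (fiber γ S)

lemma scopeMoment_eq (hp0 : 0 < p) (hp1 : p < 1) (h1 : (1 / 2 : ℝ) ^ k * ∑ z, ηP z = 1)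
    (x : Assign n) (S : Scope n k) :
    scopeMoment p ηP U β γ x S
      = if fiber γ S = ∅ then (if S ∈ β then 0 else 1)
        else if S ∈ U then 0 else scopeCoeff p ηP β γ S * ∏ j ∈ fiber γ S, sgn (x (S.1 j)) := by
  have hsplit : scopeMoment p ηP U β γ x S
      = p * (if S ∈ β then phiY p true else 1) * ((1 / 2) ^ k * ∑ c : Fin k → Bool,
          (if S ∈ U then 1 else ηP (fun j => xor (c j) (x (S.1 j)))) * ∏ j ∈ fiber γ S, sgn (c j))
        + (1 - p) * (if S ∈ β then phiY p false else 1)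
          * ((1 / 2) ^ k * ∑ c : Fin k → Bool, ∏ j ∈ fiber γ S, sgn (c j)) := by
    simp only [scopeMoment, bgFactor, Fintype.sum_bool, Finset.mul_sum, Bool.false_eq_true,
      ↓reduceIte]
    congr 1 <;> refine Finset.sum_congr rfl fun c _ => ?_ <;> split_ifs <;> ring
  rw [hsplit, scopeCoeff]
  generalize fiber γ S = T
  have hchar : (1 / 2 : ℝ) ^ k * ∑ c : Fin k → Bool, ∏ j ∈ T, sgn (c j)
      = if T = ∅ then 1 else 0 := by
    rw [sum_prod_sgn, Fintype.card_fin]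
    split_ifs
    · rw [mul_comm, two_pow_mul_half_pow]
    · rw [mul_zero]
  by_cases hU : S ∈ U
  · simp only [hU, ↓reduceIte, one_mul, hchar]
    by_cases hT : T = ∅ <;> by_cases hβ : S ∈ β <;> simp [hT, hβ, phiY_mean hp0 hp1]
  · simp only [hU, ↓reduceIte, etaHat_xor, hchar]
    by_cases hT : T = ∅
    · by_cases hβ : S ∈ β <;> simp [hT, hβ, etaHat_empty h1, phiY_mean hp0 hp1]
    · simp only [hT, ↓reduceIte]
      ring

lemma abs_scopeCoeff_le (hp0 : 0 < p) (h0 : ∀ z, 0 ≤ ηP z)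
    (h1 : (1 / 2 : ℝ) ^ k * ∑ z, ηP z = 1) (S : Scope n k) :
    |scopeCoeff p ηP β γ S| ≤ if S ∈ β then √(p * (1 - p)) else p := by
  calc |scopeCoeff p ηP β γ S|
      ≤ p * |if S ∈ β then phiY p true else 1| * 1 := by
        rw [scopeCoeff, abs_mul, abs_mul, abs_of_pos hp0]
        gcongr
        exact abs_etaHat_le_one h0 h1 _
    _ = _ := by
        split_ifs
        · rw [mul_one, mul_abs_phiY_true hp0]
        · simp

lemma abs_prod_scopeCoeff_le (hp0 : 0 < p) (h0 : ∀ z, 0 ≤ ηP z)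
    (h1 : (1 / 2 : ℝ) ^ k * ∑ z, ηP z = 1) :
    |∏ S ∈ scopesOf n k γ, scopeCoeff p ηP β γ S|
      ≤ √(p * (1 - p)) ^ (scopesOf n k γ ∩ β).card * p ^ (scopesOf n k γ \ β).card := by
  rw [Finset.abs_prod, ← Finset.filter_mem_eq_inter, ← Finset.filter_notMem_eq_sdiff,
    ← Finset.prod_const, ← Finset.prod_const, ← Finset.prod_ite]
  exact Finset.prod_le_prod (fun _ _ => abs_nonneg _) fun S _ => abs_scopeCoeff_le hp0 h0 h1 S

end ScopeMoments

section Coefficients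

variable {n k : ℕ} {p : ℝ} {ηP : (Fin k → Bool) → ℝ} {U : Finset (Scope n k)} {J : Inst n k}
  {α : Finset (Fin n)} {β : Finset (Scope n k)} {γ : Finset (Scope n k × Fin k)}

lemma condMuHat_eq_prod_scopeCoeff (hp0 : 0 < p) (hp1 : p < 1)
    (h1 : (1 / 2 : ℝ) ^ k * ∑ z, ηP z = 1)
    (hpos : ∀ x : Assign n, 0 < marg n k (plantedMass n k p ηP) (varsOf n k U) U (x, J))
    (hβ : β ⊆ scopesOf n k γ) (hU : Disjoint (scopesOf n k γ) U) :
    condMuHat n k p ηP U J α β γ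
      = (∏ S ∈ scopesOf n k γ, scopeCoeff p ηP β γ S) * if derives n k γ α then 1 else 0 := by
  have hscope : ∀ x S, scopeMoment p ηP U β γ x S
      = (if S ∈ scopesOf n k γ then scopeCoeff p ηP β γ S else 1)
        * ∏ j ∈ fiber γ S, sgn (x (S.1 j)) := by
    intro x S
    rw [scopeMoment_eq hp0 hp1 h1]
    by_cases hS : S ∈ scopesOf n k γ
    · have hne := mem_scopesOf_iff.1 hS
      rw [if_neg hne.ne_empty, if_neg (Finset.disjoint_left.1 hU hS), if_pos hS]
    · have hempty := Finset.not_nonempty_iff_eq_empty.1 (mem_scopesOf_iff.not.1 hS)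
      rw [if_pos hempty, if_neg (fun h => hS (hβ h)), if_neg hS, hempty, Finset.prod_empty,
        mul_one]
  rw [condMuHat_eq hp0 hp1 h1 hpos, ← sum_chiF_mul_prod_sgn, Finset.mul_sum, Finset.mul_sum,
    Finset.mul_sum]
  refine Finset.sum_congr rfl fun x _ => ?_
  rw [Finset.prod_congr rfl fun S _ => hscope x S, Finset.prod_mul_distrib, Fintype.prod_ite_mem,
    ← prod_eq_prod_prod_fiber γ fun e => sgn (x (e.1.1 e.2))]
  ring

lemma condMuHat_eq_zero_of_scopeMoment (hp0 : 0 < p) (hp1 : p < 1)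
    (h1 : (1 / 2 : ℝ) ^ k * ∑ z, ηP z = 1)
    (hpos : ∀ x : Assign n, 0 < marg n k (plantedMass n k p ηP) (varsOf n k U) U (x, J))
    (S : Scope n k) (hS : ∀ x, scopeMoment p ηP U β γ x S = 0) :
    condMuHat n k p ηP U J α β γ = 0 := by
  rw [condMuHat_eq hp0 hp1 h1 hpos, Finset.sum_eq_zero, mul_zero]
  exact fun x _ => by rw [Finset.prod_eq_zero (Finset.mem_univ S) (hS x), mul_zero]

lemma condMuHat_eq_zero {t : ℕ} (hp0 : 0 < p) (hp1 : p < 1) (htk : t ≤ k)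
    (h1 : (1 / 2 : ℝ) ^ k * ∑ z, ηP z = 1)
    (hunif : ∀ T : Finset (Fin k), T.card = t - 1 → ∀ a : Fin k → Bool,
      ((1 / 2 : ℝ) ^ k * ∑ z : Fin k → Bool, if ∀ j ∈ T, z j = a j then ηP z else 0)
        = (1 / 2 : ℝ) ^ (t - 1))
    (hpos : ∀ x : Assign n, 0 < marg n k (plantedMass n k p ηP) (varsOf n k U) U (x, J))
    (h : ¬(derives n k γ α ∧ arityGE n k γ t ∧ β ⊆ scopesOf n k γ ∧
        Disjoint β U ∧ Disjoint (scopesOf n k γ) U)) :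
    condMuHat n k p ηP U J α β γ = 0 := by
  have hvanish := condMuHat_eq_zero_of_scopeMoment (α := α) (β := β) (γ := γ) hp0 hp1 h1 hpos
  by_cases hβ : β ⊆ scopesOf n k γ
  swap
  · obtain ⟨S, hSβ, hSγ⟩ := Finset.not_subset.1 hβ
    have hempty := Finset.not_nonempty_iff_eq_empty.1 (mem_scopesOf_iff.not.1 hSγ)
    exact hvanish S fun x => by rw [scopeMoment_eq hp0 hp1 h1, if_pos hempty, if_pos hSβ]
  by_cases hU : Disjoint (scopesOf n k γ) U
  swap
  · obtain ⟨S, hSγ, hSU⟩ := Finset.not_disjoint_iff.1 hU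
    exact hvanish S fun x => by
      rw [scopeMoment_eq hp0 hp1 h1, if_neg (mem_scopesOf_iff.1 hSγ).ne_empty, if_pos hSU]
  by_cases harity : arityGE n k γ t
  swap
  · obtain ⟨S, hSγ, hlt⟩ : ∃ S ∈ scopesOf n k γ, (fiber γ S).card < t := by
      simpa [arityGE, card_filter_fst_eq_card_fiber] using harity
    have hne := mem_scopesOf_iff.1 hSγ
    exact hvanish S fun x => by
      rw [scopeMoment_eq hp0 hp1 h1, if_neg hne.ne_empty, if_neg (Finset.disjoint_left.1 hU hSγ),
        scopeCoeff, etaHat_eq_zero htk hunif hne hlt, mul_zero, zero_mul]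
  have hd : ¬derives n k γ α := fun hd =>
    h ⟨hd, harity, hβ, Finset.disjoint_of_subset_left hβ hU, hU⟩
  rw [condMuHat_eq_prod_scopeCoeff hp0 hp1 h1 hpos hβ hU, if_neg hd, mul_zero]

end Coefficients

theorem condMuHat_bounds_general (n k t : ℕ) (htk : t ≤ k)
    (P : (Fin k → Bool) → Bool) (ηP : (Fin k → Bool) → ℝ)
    (hP : SupportsUniform k t P ηP)
    (p : ℝ) (hp0 : 0 < p) (hp1 : p < 1)
    (U : Finset (Scope n k)) (J : Inst n k)
    (hpos : ∀ x : Assign n,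
      0 < marg n k (plantedMass n k p ηP) (varsOf n k U) U (x, J))
    (α : Finset (Fin n)) (β : Finset (Scope n k)) (γ : Finset (Scope n k × Fin k)) :
    (derives n k γ α ∧ arityGE n k γ t ∧ β ⊆ scopesOf n k γ ∧
        Disjoint β U ∧ Disjoint (scopesOf n k γ) U →
      |condMuHat n k p ηP U J α β γ|
        ≤ Real.sqrt (p * (1 - p)) ^ (scopesOf n k γ ∩ β).card
            * p ^ (scopesOf n k γ \ β).card) ∧
    (¬(derives n k γ α ∧ arityGE n k γ t ∧ β ⊆ scopesOf n k γ ∧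
        Disjoint β U ∧ Disjoint (scopesOf n k γ) U) →
      condMuHat n k p ηP U J α β γ = 0) := by
  obtain ⟨h0, h1, -, hunif⟩ := hP
  refine ⟨?_, condMuHat_eq_zero hp0 hp1 htk h1 hunif hpos⟩
  rintro ⟨hd, -, hβ, -, hU⟩
  rw [condMuHat_eq_prod_scopeCoeff hp0 hp1 h1 hpos hβ hU, if_pos hd, mul_one]
  exact abs_prod_scopeCoeff_le hp0 h0 h1

/-- Fourier coefficient bounds for the conditioned planted density. -/
theorem condMuHat_bounds (n k t : ℕ) (hk : 2 ≤ k) (ht : 3 ≤ t) (htk : t ≤ k) (hn : k ≤ n)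
    (P : (Fin k → Bool) → Bool) (ηP : (Fin k → Bool) → ℝ)
    (hP : SupportsUniform k t P ηP)
    (p : ℝ) (hp0 : 0 < p) (hp1 : p < 1)
    (U : Finset (Scope n k)) (J : Inst n k)
    (hpos : ∀ x : Assign n,
      0 < marg n k (plantedMass n k p ηP) (varsOf n k U) U (x, J))
    (α : Finset (Fin n)) (β : Finset (Scope n k)) (γ : Finset (Scope n k × Fin k)) :
    (derives n k γ α ∧ arityGE n k γ t ∧ β ⊆ scopesOf n k γ ∧
        Disjoint β U ∧ Disjoint (scopesOf n k γ) U →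
      |condMuHat n k p ηP U J α β γ|
        ≤ Real.sqrt (p * (1 - p)) ^ (scopesOf n k γ ∩ β).card
            * p ^ (scopesOf n k γ \ β).card) ∧
    (¬(derives n k γ α ∧ arityGE n k γ t ∧ β ⊆ scopesOf n k γ ∧
        Disjoint β U ∧ Disjoint (scopesOf n k γ) U) →
      condMuHat n k p ηP U J α β γ = 0) :=
  condMuHat_bounds_general n k t htk P ηP hP p hp0 hp1 U J hpos α β γ

end RandomCSP
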